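/- Almost surely, (1/((n−1)·m·p(m)))·Σ_{k=1}^n tr((Ã^k_m − Ā_m)(Ã^k_m − Ā_m)ᵀ) → σ² as m → ∞. -/

import Mathlib

/-!
Write `Y_{ij} = Σ_k (e^k_{ij} - ē_{ij})²` for the centred sum of squares of the noise in cell
`(i, j)`. The deterministic part `A_m` cancels in `Ã^k_m - Ā_m`, so the trace sum equals
`σ² Σ_{i < m, j < p(m)} Y_{ij}`. The `Y_{ij}` are pairwise independent, have mean `n - 1`, and
their variance is bounded by `n Σ_k E (e^k_{00})⁴`. Hence the average of `Y` over the `m · p(m)`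
cells has variance `O(1 / (m · p(m))) = O(1 / m²)`, which is summable, and Chebyshev's inequality
with Borel–Cantelli gives almost sure convergence of that average to `n - 1`.
-/

open MeasureTheory ProbabilityTheory Filter Matrix Finset

noncomputable def sumSqDev {n : ℕ} (v : Fin n → ℝ) : ℝ :=
  ∑ k, (v k - (n : ℝ)⁻¹ * ∑ l, v l) ^ 2

lemma sumSqDev_eq {n : ℕ} (v : Fin n → ℝ) :
    sumSqDev v = ∑ k, v k ^ 2 - (n : ℝ)⁻¹ * (∑ k, v k) ^ 2 := by
  rcases Nat.eq_zero_or_pos n with rfl | hn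
  · simp [sumSqDev]
  have hn' : (n : ℝ) ≠ 0 := by positivity
  simp only [sumSqDev, sub_sq, sum_add_distrib, sum_sub_distrib, ← sum_mul, ← mul_sum,
    sum_const, card_univ, Fintype.card_fin, nsmul_eq_mul]
  field_simp
  ring

lemma sumSqDev_nonneg {n : ℕ} (v : Fin n → ℝ) : 0 ≤ sumSqDev v :=
  sum_nonneg fun _ _ => sq_nonneg _

lemma sumSqDev_le_sum_sq {n : ℕ} (v : Fin n → ℝ) : sumSqDev v ≤ ∑ k, v k ^ 2 := by
  rw [sumSqDev_eq]
  exact sub_le_self _ (by positivity)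

lemma sq_sumSqDev_le {n : ℕ} (v : Fin n → ℝ) : sumSqDev v ^ 2 ≤ n * ∑ k, v k ^ 4 :=
  calc sumSqDev v ^ 2 ≤ (∑ k, v k ^ 2) ^ 2 :=
        pow_le_pow_left₀ (sumSqDev_nonneg v) (sumSqDev_le_sum_sq v) 2
    _ ≤ n * ∑ k, (v k ^ 2) ^ 2 := by
        simpa using sq_sum_le_card_mul_sum_sq (s := univ) (f := fun k => v k ^ 2)
    _ = n * ∑ k, v k ^ 4 := by simp_rw [← pow_mul]

lemma sumSqDev_const_add_mul {n : ℕ} (a σ : ℝ) (v : Fin n → ℝ) :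
    sumSqDev (fun k => a + σ * v k) = σ ^ 2 * sumSqDev v := by
  rcases Nat.eq_zero_or_pos n with rfl | hn
  · simp [sumSqDev]
  have hn' : (n : ℝ) ≠ 0 := by positivity
  simp only [sumSqDev, mul_sum]
  refine sum_congr rfl fun k _ => ?_
  simp only [sum_add_distrib, sum_const, card_univ, Fintype.card_fin, nsmul_eq_mul, ← mul_sum]
  field_simp
  ring

lemma measurable_sumSqDev {n : ℕ} : Measurable (sumSqDev (n := n)) := by
  unfold sumSqDev; fun_prop

lemma trace_mul_transpose_self {m p : Type*} [Fintype m] [Fintype p] (M : Matrix m p ℝ) :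
    (M * Mᵀ).trace = ∑ i, ∑ j, M i j ^ 2 := by
  simp [Matrix.trace, Matrix.mul_apply, sq]

lemma sum_trace_sub_mean_mul_transpose {n : ℕ} {m p : Type*} [Fintype m] [Fintype p]
    (M : Fin n → Matrix m p ℝ) :
    ∑ k, ((M k - (n : ℝ)⁻¹ • ∑ l, M l) * (M k - (n : ℝ)⁻¹ • ∑ l, M l)ᵀ).trace
      = ∑ i, ∑ j, sumSqDev (fun k => M k i j) := by
  simp only [trace_mul_transpose_self, sumSqDev, Matrix.sub_apply, Matrix.smul_apply,
    Matrix.sum_apply, smul_eq_mul]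
  rw [sum_comm]
  exact sum_congr rfl fun i _ => sum_comm

lemma sum_trace_sub_mean_mul_transpose_add_smul {n : ℕ} {m p : Type*} [Fintype m] [Fintype p]
    (A : Matrix m p ℝ) (σ : ℝ) (E : Fin n → Matrix m p ℝ) :
    ∑ k, ((A + σ • E k - (n : ℝ)⁻¹ • ∑ l, (A + σ • E l)) *
        (A + σ • E k - (n : ℝ)⁻¹ • ∑ l, (A + σ • E l))ᵀ).trace
      = σ ^ 2 * ∑ i, ∑ j, sumSqDev (fun k => E k i j) := by
  simp only [sum_trace_sub_mean_mul_transpose, Matrix.add_apply, Matrix.smul_apply, smul_eq_mul,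
    sumSqDev_const_add_mul, mul_sum]

section Probability

variable {Ω : Type*} {mΩ : MeasurableSpace Ω} {μ : Measure Ω}

lemma integral_sumSqDev [IsProbabilityMeasure μ] {n : ℕ} (hn : n ≠ 0) {X : Fin n → Ω → ℝ}
    {v : ℝ} (hX : ∀ k, MemLp (X k) 2 μ) (hind : Pairwise fun k l => IndepFun (X k) (X l) μ)
    (hmean : ∀ k, μ[X k] = 0) (hvar : ∀ k, ∫ ω, X k ω ^ 2 ∂μ = v) :
    ∫ ω, sumSqDev (X · ω) ∂μ = (n - 1) * v := by
  have hsum_mem : MemLp (fun ω => ∑ k, X k ω) 2 μ := memLp_finsetSum _ fun k _ => hX k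
  have hsum_sq : ∫ ω, (∑ k, X k ω) ^ 2 ∂μ = n * v := by
    have hsum_mean : μ[fun ω => ∑ k, X k ω] = 0 := by
      simp [integral_finsetSum _ fun k _ => (hX k).integrable one_le_two, hmean]
    calc ∫ ω, (∑ k, X k ω) ^ 2 ∂μ = Var[∑ k, X k; μ] := by
          rw [Finset.sum_fn, variance_of_integral_eq_zero hsum_mem.aemeasurable hsum_mean]
      _ = ∑ k, Var[X k; μ] :=
          IndepFun.variance_sum (fun k _ => hX k) fun k _ l _ hkl => hind hkl
      _ = n * v := by
          simp [variance_of_integral_eq_zero (hX _).aemeasurable (hmean _), hvar]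
  simp_rw [sumSqDev_eq]
  rw [integral_sub (integrable_finsetSum _ fun k _ => (hX k).integrable_sq)
      (hsum_mem.integrable_sq.const_mul _), integral_finsetSum _ fun k _ => (hX k).integrable_sq,
    integral_const_mul]
  rw [hsum_sq]
  simp only [hvar, sum_const, card_univ, Fintype.card_fin, nsmul_eq_mul]
  field_simp

lemma measurable_sumSqDev_comp {n : ℕ} {X : Fin n → Ω → ℝ} (hmeas : ∀ k, Measurable (X k)) :
    Measurable fun ω => sumSqDev (X · ω) :=
  measurable_sumSqDev.comp (measurable_pi_lambda _ hmeas)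

lemma memLp_sumSqDev {n : ℕ} {X : Fin n → Ω → ℝ} (hmeas : ∀ k, Measurable (X k))
    (h4 : ∀ k, Integrable (fun ω => X k ω ^ 4) μ) : MemLp (fun ω => sumSqDev (X · ω)) 2 μ := by
  have hm := (measurable_sumSqDev_comp hmeas).aestronglyMeasurable (μ := μ)
  refine (memLp_two_iff_integrable_sq hm).2 <|
    ((integrable_finsetSum univ fun k _ => h4 k).const_mul (n : ℝ)).mono' (hm.pow 2) ?_
  filter_upwards with ω
  simpa using sq_sumSqDev_le (X · ω)

lemma variance_sumSqDev_le [IsProbabilityMeasure μ] {n : ℕ} {X : Fin n → Ω → ℝ}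
    (hmeas : ∀ k, Measurable (X k)) (h4 : ∀ k, Integrable (fun ω => X k ω ^ 4) μ) :
    Var[fun ω => sumSqDev (X · ω); μ] ≤ n * ∑ k, ∫ ω, X k ω ^ 4 ∂μ := by
  calc Var[fun ω => sumSqDev (X · ω); μ] ≤ ∫ ω, sumSqDev (X · ω) ^ 2 ∂μ :=
        variance_le_expectation_sq (measurable_sumSqDev_comp hmeas).aestronglyMeasurable
    _ ≤ ∫ ω, n * ∑ k, X k ω ^ 4 ∂μ :=
        integral_mono (memLp_sumSqDev hmeas h4).integrable_sq
          ((integrable_finsetSum _ fun k _ => h4 k).const_mul _) fun ω => sq_sumSqDev_le _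
    _ = n * ∑ k, ∫ ω, X k ω ^ 4 ∂μ := by
        rw [integral_const_mul, integral_finsetSum _ fun k _ => h4 k]

lemma ProbabilityTheory.iIndepFun.indepFun_pi_of_disjoint {ι κ β : Type*} [Fintype κ]
    [MeasurableSpace β] {f : ι → Ω → β} (hf : iIndepFun f μ) (hmeas : ∀ i, Measurable (f i))
    {g g' : κ → ι} (hgg' : ∀ k k', g k ≠ g' k') :
    IndepFun (fun ω k => f (g k) ω) (fun ω k => f (g' k) ω) μ := by
  classical
  have hST : Disjoint (univ.image g) (univ.image g') := by
    simpa [Finset.disjoint_left] using fun k k' => (hgg' k k').symm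
  exact (hf.indepFun_finset _ _ hST hmeas).comp
    (φ := fun v k => v ⟨g k, mem_image_of_mem g (mem_univ k)⟩)
    (ψ := fun v k => v ⟨g' k, mem_image_of_mem g' (mem_univ k)⟩) (by fun_prop) (by fun_prop)

lemma ae_tendsto_sub_integral_of_summable_variance [IsFiniteMeasure μ] {Z : ℕ → Ω → ℝ}
    (hZ : ∀ m, MemLp (Z m) 2 μ) (hsum : Summable fun m => Var[Z m; μ]) :
    ∀ᵐ ω ∂μ, Tendsto (fun m => Z m ω - μ[Z m]) atTop (nhds 0) := by
  have hδ : ∀ K : ℕ, ∀ᵐ ω ∂μ, ∀ᶠ m in atTop, |Z m ω - μ[Z m]| < 1 / (K + 1) := by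
    intro K
    have hpos : (0 : ℝ) < 1 / (K + 1) := by positivity
    have hBC := ae_eventually_notMem (μ := μ) (s := fun m => {ω | 1 / (K + 1) ≤ |Z m ω - μ[Z m]|})
      (ne_top_of_le_ne_top (hsum.div_const _).tsum_ofReal_ne_top
        (ENNReal.tsum_le_tsum fun m => meas_ge_le_variance_div_sq (hZ m) hpos))
    filter_upwards [hBC] with ω hω
    filter_upwards [hω] with m hm
    simpa using hm
  filter_upwards [ae_all_iff.2 hδ] with ω hω
  refine Metric.tendsto_nhds.2 fun ε hε => ?_
  obtain ⟨K, hK⟩ := exists_nat_one_div_lt hε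
  filter_upwards [hω K] with m hm
  rw [Real.dist_eq, sub_zero]
  exact hm.trans hK

lemma ae_tendsto_average_of_pairwise_indepFun [IsProbabilityMeasure μ] {ι : Type*}
    {Y : ι → Ω → ℝ} {a C : ℝ} (hY : ∀ i, MemLp (Y i) 2 μ) (hmean : ∀ i, μ[Y i] = a)
    (hvar : ∀ i, Var[Y i; μ] ≤ C) (hind : Pairwise fun i j => IndepFun (Y i) (Y j) μ)
    {s : ℕ → Finset ι} (hne : ∀ᶠ m in atTop, (s m).Nonempty)
    (hsum : Summable fun m => ((#(s m) : ℝ))⁻¹) :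
    ∀ᵐ ω ∂μ, Tendsto (fun m => (∑ i ∈ s m, Y i ω) / #(s m)) atTop (nhds a) := by
  set Z : ℕ → Ω → ℝ := fun m ω => (∑ i ∈ s m, Y i) ω * (#(s m) : ℝ)⁻¹
  have hZ : ∀ m, MemLp (Z m) 2 μ := fun m =>
    (memLp_finsetSum' _ fun i _ => hY i).mul_const _
  have hZvar : ∀ m, Var[Z m; μ] ≤ C * (#(s m) : ℝ)⁻¹ := by
    intro m
    have hsum_var : Var[∑ i ∈ s m, Y i; μ] ≤ #(s m) * C := by
      rw [IndepFun.variance_sum (fun i _ => hY i) fun i _ j _ hij => hind hij]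
      simpa using sum_le_sum fun i (_ : i ∈ s m) => hvar i
    rw [variance_mul_const]
    calc Var[∑ i ∈ s m, Y i; μ] * (#(s m) : ℝ)⁻¹ ^ 2 ≤ #(s m) * C * (#(s m) : ℝ)⁻¹ ^ 2 := by
          gcongr
      _ = C * (#(s m) : ℝ)⁻¹ := by
          rcases eq_or_ne (#(s m) : ℝ) 0 with h | h
          · simp [h]
          · field_simp
  have hZmean : ∀ᶠ m in atTop, μ[Z m] = a := by
    filter_upwards [hne] with m hm
    have hcard : (#(s m) : ℝ) ≠ 0 := by exact_mod_cast hm.card_ne_zero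
    simp only [Z, Finset.sum_apply, integral_mul_const,
      integral_finsetSum _ fun i _ => (hY i).integrable one_le_two, hmean, sum_const, nsmul_eq_mul]
    field_simp
  filter_upwards [ae_tendsto_sub_integral_of_summable_variance hZ <|
    (hsum.mul_left C).of_nonneg_of_le (fun m => variance_nonneg _ _) hZvar] with ω hω
  refine (zero_add a ▸ hω.add_const a).congr' ?_
  filter_upwards [hZmean] with m hm
  rw [hm, sub_add_cancel]
  simp [Z, div_eq_mul_inv]

lemma eventually_pos_of_tendsto_div {p : ℕ → ℕ} {c : ℝ} (hc : 0 < c)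
    (hp : Tendsto (fun m : ℕ => (m : ℝ) / p m) atTop (nhds c)) : ∀ᶠ m in atTop, 0 < p m := by
  filter_upwards [hp.eventually_ne hc.ne'] with m hm
  exact Nat.pos_of_ne_zero fun h => by simp [h] at hm

lemma summable_inv_mul_of_tendsto_div {p : ℕ → ℕ} {c : ℝ} (hc : 0 < c)
    (hp : Tendsto (fun m : ℕ => (m : ℝ) / p m) atTop (nhds c)) :
    Summable fun m : ℕ => ((m : ℝ) * p m)⁻¹ := by
  refine Summable.of_norm_bounded_eventually_nat
    ((Real.summable_nat_pow_inv.2 one_lt_two).mul_left (c + 1)) ?_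
  filter_upwards [hp.eventually (gt_mem_nhds (lt_add_one c)), eventually_pos_of_tendsto_div hc hp,
    eventually_gt_atTop 0] with m hm hp0 hm0
  have hp0' : (0 : ℝ) < p m := by exact_mod_cast hp0
  have hm0' : (0 : ℝ) < m := by exact_mod_cast hm0
  have hmp : (m : ℝ) ≤ (c + 1) * p m := ((div_lt_iff₀ hp0').1 hm).le
  rw [Real.norm_of_nonneg (by positivity), ← div_eq_mul_inv, inv_le_comm₀ (by positivity)
    (by positivity), inv_div, div_le_iff₀ (by linarith)]
  nlinarith

lemma ae_tendsto_average_sumSqDev [IsProbabilityMeasure μ] {n : ℕ} (hn : n ≠ 0) {p : ℕ → ℕ}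
    {c : ℝ} (hc : 0 < c) (hp : Tendsto (fun m : ℕ => (m : ℝ) / p m) atTop (nhds c))
    {e : Fin n → ℕ → ℕ → Ω → ℝ} (hmeas : ∀ k i j, Measurable (e k i j))
    (hindep : iIndepFun (fun q : Fin n × ℕ × ℕ => e q.1 q.2.1 q.2.2) μ)
    (hident : ∀ k i j, IdentDistrib (e k i j) (e k 0 0) μ μ)
    (hsq : ∀ k i j, Integrable (fun ω => e k i j ω ^ 2) μ) (hmean : ∀ k i j, μ[e k i j] = 0)
    (hvar : ∀ k i j, ∫ ω, e k i j ω ^ 2 ∂μ = 1)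
    (hmom4 : ∀ k i j, Integrable (fun ω => e k i j ω ^ 4) μ) :
    ∀ᵐ ω ∂μ, Tendsto (fun m => (∑ q ∈ range m ×ˢ range (p m), sumSqDev fun k => e k q.1 q.2 ω)
      / (m * p m)) atTop (nhds ((n : ℝ) - 1)) := by
  set Y : ℕ × ℕ → Ω → ℝ := fun q ω => sumSqDev fun k => e k q.1 q.2 ω
  have hY_mem : ∀ q, MemLp (Y q) 2 μ := fun q =>
    memLp_sumSqDev (fun k => hmeas k _ _) fun k => hmom4 k _ _
  have hY_mean : ∀ q, μ[Y q] = (n : ℝ) - 1 := fun q => by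
    simpa using integral_sumSqDev hn
      (fun k => (memLp_two_iff_integrable_sq (hmeas k _ _).aestronglyMeasurable).2 (hsq k _ _))
      (fun k l hkl => hindep.indepFun (i := (k, q)) (j := (l, q)) (by simpa using hkl))
      (fun k => hmean k _ _) fun k => hvar k q.1 q.2
  have hmom4_eq : ∀ k i j, ∫ ω, e k i j ω ^ 4 ∂μ = ∫ ω, e k 0 0 ω ^ 4 ∂μ := fun k i j =>
    ((hident k i j).comp (measurable_id.pow_const 4)).integral_eq
  have hY_var : ∀ q, Var[Y q; μ] ≤ n * ∑ k, ∫ ω, e k 0 0 ω ^ 4 ∂μ := fun q => by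
    simpa only [hmom4_eq] using
      variance_sumSqDev_le (fun k => hmeas k q.1 q.2) fun k => hmom4 k _ _
  have hY_indep : Pairwise fun q q' => IndepFun (Y q) (Y q') μ := fun q q' hqq' =>
    (hindep.indepFun_pi_of_disjoint (fun r => hmeas r.1 r.2.1 r.2.2) (g := fun k => (k, q))
      (g' := fun k => (k, q')) fun _ _ h => hqq' (congrArg Prod.snd h)).comp
      measurable_sumSqDev measurable_sumSqDev
  have hne : ∀ᶠ m in atTop, (range m ×ˢ range (p m)).Nonempty := by
    filter_upwards [eventually_pos_of_tendsto_div hc hp, eventually_gt_atTop 0] with m hp0 hm0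
    simp only [nonempty_product, nonempty_range_iff]
    omega
  simpa using ae_tendsto_average_of_pairwise_indepFun hY_mem hY_mean hY_var hY_indep hne
    (by simpa using summable_inv_mul_of_tendsto_div hc hp)

end Probability

theorem stmt4_general
    {Ω : Type*} [MeasureSpace Ω] [IsProbabilityMeasure (ℙ : Measure Ω)]
    (c : ℝ) (hc : 0 < c)
    (p : ℕ → ℕ)
    (hp : Tendsto (fun m : ℕ => (m : ℝ) / (p m : ℝ)) atTop (nhds c))
    (n : ℕ) (hn : 2 ≤ n) (σ : ℝ)
    (e : Fin n → ℕ → ℕ → Ω → ℝ)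
    (hmeas : ∀ k i j, Measurable (e k i j))
    (hindep : iIndepFun
      (fun q : Fin n × ℕ × ℕ => e q.1 q.2.1 q.2.2) ℙ)
    (hident : ∀ k i j, IdentDistrib (e k i j) (e k 0 0) ℙ ℙ)
    (hsq : ∀ k i j, Integrable (fun ω => (e k i j ω) ^ 2))
    (hmean : ∀ k i j, ∫ ω, e k i j ω = 0)
    (hvar : ∀ k i j, ∫ ω, (e k i j ω) ^ 2 = 1)
    (hmom4 : ∀ k i j, Integrable (fun ω => (e k i j ω) ^ 4))
    (A : ∀ m : ℕ, Matrix (Fin m) (Fin (p m)) ℝ)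
    (Atil : Fin n → ∀ m : ℕ, Ω → Matrix (Fin m) (Fin (p m)) ℝ)
    (hAtil : ∀ k m ω, Atil k m ω = A m + σ • Matrix.of fun i j => e k i.val j.val ω)
    (Abar : ∀ m : ℕ, Ω → Matrix (Fin m) (Fin (p m)) ℝ)
    (hAbar : ∀ m ω, Abar m ω = (n : ℝ)⁻¹ • ∑ k : Fin n, Atil k m ω) :
    ∀ᵐ ω, Tendsto
      (fun m : ℕ => (1 / (((n : ℝ) - 1) * m * p m)) *
        ∑ k : Fin n, ((Atil k m ω - Abar m ω) * (Atil k m ω - Abar m ω)ᵀ).trace)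
      atTop (nhds (σ ^ 2)) := by
  have hn1 : (n : ℝ) - 1 ≠ 0 := by
    have : (2 : ℝ) ≤ n := by exact_mod_cast hn
    linarith
  have htrace : ∀ m ω, ∑ k, ((Atil k m ω - Abar m ω) * (Atil k m ω - Abar m ω)ᵀ).trace
      = σ ^ 2 * ∑ q ∈ range m ×ˢ range (p m), sumSqDev fun k => e k q.1 q.2 ω := by
    intro m ω
    simp only [hAbar, hAtil, sum_trace_sub_mean_mul_transpose_add_smul, Matrix.of_apply,
      sum_product]
    rw [Fin.sum_univ_eq_sum_range (fun i => ∑ j : Fin (p m), sumSqDev fun k => e k i j ω)]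
    exact congrArg (σ ^ 2 * ·) <| sum_congr rfl fun i _ =>
      Fin.sum_univ_eq_sum_range (fun j => sumSqDev fun k => e k i j ω) _
  filter_upwards [ae_tendsto_average_sumSqDev (by omega) hc hp hmeas hindep hident hsq hmean hvar
    hmom4] with ω hω
  convert hω.const_mul (σ ^ 2 / ((n : ℝ) - 1)) using 2 with m
  · rw [htrace]
    field_simp
  · field_simp

/-- the sample variance estimator is strongly consistent: almost surely
`(1/((n−1)·m·p(m))) Σ_{k=1}^n tr((Ã^k_m − Ā_m)(Ã^k_m − Ā_m)ᵀ) → σ²` as `m → ∞`. -/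
theorem stmt4
    {Ω : Type*} [MeasureSpace Ω] [IsProbabilityMeasure (ℙ : Measure Ω)]
    (c : ℝ) (hc : 0 < c)
    (p : ℕ → ℕ)
    (hp : Tendsto (fun m : ℕ => (m : ℝ) / (p m : ℝ)) atTop (nhds c))
    (n : ℕ) (hn : 2 ≤ n) (σ : ℝ) (hσ : 0 < σ)
    (e : Fin n → ℕ → ℕ → Ω → ℝ)
    (hmeas : ∀ k i j, Measurable (e k i j))
    (hindep : iIndepFun
      (fun q : Fin n × ℕ × ℕ => e q.1 q.2.1 q.2.2) ℙ)
    (hident : ∀ k i j, IdentDistrib (e k i j) (e k 0 0) ℙ ℙ)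
    (hint : ∀ k i j, Integrable (e k i j))
    (hsq : ∀ k i j, Integrable (fun ω => (e k i j ω) ^ 2))
    (hmean : ∀ k i j, ∫ ω, e k i j ω = 0)
    (hvar : ∀ k i j, ∫ ω, (e k i j ω) ^ 2 = 1)
    (hmom4 : ∀ k i j, Integrable (fun ω => (e k i j ω) ^ 4))
    (A : ∀ m : ℕ, Matrix (Fin m) (Fin (p m)) ℝ)
    (hA : ∃ C : ℝ, ∀ m : ℕ, (1 / (m * p m : ℝ)) * (A m * (A m)ᵀ).trace ≤ C)
    (U : ∀ m : ℕ, Matrix (Fin m) (Fin (p m)) ℝ)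
    (hU : ∀ m i j, U m i j = 1)
    (Atil : Fin n → ∀ m : ℕ, Ω → Matrix (Fin m) (Fin (p m)) ℝ)
    (hAtil : ∀ k m ω, Atil k m ω = A m + σ • Matrix.of fun i j => e k i.val j.val ω)
    (Abar : ∀ m : ℕ, Ω → Matrix (Fin m) (Fin (p m)) ℝ)
    (hAbar : ∀ m ω, Abar m ω = (n : ℝ)⁻¹ • ∑ k : Fin n, Atil k m ω) :
    ∀ᵐ ω, Tendsto
      (fun m : ℕ => (1 / (((n : ℝ) - 1) * m * p m)) *
        ∑ k : Fin n, ((Atil k m ω - Abar m ω) * (Atil k m ω - Abar m ω)ᵀ).trace)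
      atTop (nhds (σ ^ 2)) :=
  stmt4_general c hc p hp n hn σ e hmeas hindep hident hsq hmean hvar hmom4 A Atil hAtil Abar hAbar
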